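/- arXiv:2204.09972 — 3 statements merged into one kernel-verified Lean document; each statement's English description precedes it below -/
import Mathlib

section
/- Let E be a finite nonempty type and let P be an irreducible stochastic matrix on E. If a column vector h : E → ℝ satisfies P h = h, then h is constant, i.e. there exists c ∈ ℝ with h(i) = c for all i ∈ E. -/
/-!
Maximum principle: if `P` is stochastic and `P h = h`, then `h` at a maximiser `i` is a convex
combination of the values of `h`, so `h j = h i` whenever `P i j > 0`. The powers of `P` are again
stochastic and fix `h`, and irreducibility gives some power with a positive `(i, j)` entry for every
`j`, so `h` is constant.
-/

open Matrix BigOperators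

namespace Matrix

variable {n R : Type*} [Fintype n] [DecidableEq n]

theorem pow_mulVec_eq_self [Semiring R] {M : Matrix n n R} {h : n → R} (hh : M *ᵥ h = h)
    (k : ℕ) : (M ^ k) *ᵥ h = h := by
  induction k with
  | zero => exact one_mulVec h
  | succ k ih => rw [pow_succ, ← mulVec_mulVec, hh, ih]

variable [CommRing R] [LinearOrder R] [IsStrictOrderedRing R] {M : Matrix n n R} {h : n → R}

theorem apply_eq_of_mem_rowStochastic_of_mulVec_eq_self (hM : M ∈ rowStochastic R n)
    (hh : M *ᵥ h = h) {i j : n} (hi : ∀ k, h k ≤ h i) (hij : 0 < M i j) : h j = h i := by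
  have hsum : ∑ k, M i k * (h i - h k) = 0 := by
    have hrow : ∑ k, M i k * h k = h i := congrFun hh i
    simp only [mul_sub, Finset.sum_sub_distrib, ← Finset.sum_mul, sum_row_of_mem_rowStochastic hM,
      one_mul, hrow, sub_self]
  have hterm : M i j * (h i - h j) = 0 :=
    (Finset.sum_eq_zero_iff_of_nonneg fun k _ =>
      mul_nonneg (nonneg_of_mem_rowStochastic hM) (sub_nonneg.2 (hi k))).1 hsum j
      (Finset.mem_univ j)
  linarith [(mul_eq_zero.1 hterm).resolve_left hij.ne']

theorem IsIrreducible.exists_const_of_mulVec_eq_self [Nonempty n] (hirr : M.IsIrreducible)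
    (hM : M ∈ rowStochastic R n) (hh : M *ᵥ h = h) : ∃ c, ∀ i, h i = c := by
  obtain ⟨i, hi⟩ := Finite.exists_max h
  refine ⟨h i, fun j => ?_⟩
  obtain ⟨k, -, hk⟩ := (isIrreducible_iff_exists_pow_pos hirr.nonneg).1 hirr i j
  exact apply_eq_of_mem_rowStochastic_of_mulVec_eq_self (pow_mem hM k)
    (pow_mulVec_eq_self hh k) hi hk

end Matrix

theorem stmt2 {E : Type*} [Fintype E] [Nonempty E] [DecidableEq E]
    (P : Matrix E E ℝ)
    (hP0 : ∀ i j, 0 ≤ P i j) (hP1 : ∀ i, ∑ j, P i j = 1)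
    (hirr : ∀ i j, ∃ n, 1 ≤ n ∧ 0 < (P ^ n) i j)
    (h : E → ℝ) (hh : P *ᵥ h = h) :
    ∃ c : ℝ, ∀ i, h i = c := by
  have hstoch : P ∈ rowStochastic ℝ E := mem_rowStochastic_iff_sum.2 ⟨hP0, hP1⟩
  have hP : P.IsIrreducible :=
    (isIrreducible_iff_exists_pow_pos hP0).2 hirr
  exact hP.exists_const_of_mulVec_eq_self hstoch hh
end

section
/- Let E be a finite nonempty type, let P be an irreducible stochastic matrix on E, and let A ⊆ E be a nonempty subset with complement B. Then I − P_{BB} is invertible and the censored matrix P^{(A)} := P_{AA} + P_{AB} (I − P_{BB})^{-1} P_{BA} is a stochastic matrix on A: all its entries are nonnegative and each of its rows sums to 1. -/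
/-!
Write `Q = P_{BB}`. Because `P` is irreducible and `A` is nonempty, from every state of `B`
the chain eventually enters `A`, so every row of some power of `Q` sums to less than one.
This yields a minimum principle: `Q x ≤ x` forces `x ≥ 0` (compare the minimal coordinate
`x i₀` with `(Q ^ n x) i₀ ≥ (∑ⱼ (Q ^ n) i₀ j) x i₀`). Applied to `±v` with `(I - Q) v = 0` it
shows `I - Q` is injective, and applied to the columns of `(I - Q)⁻¹` it shows the inverse is
nonnegative. Finally `P_{BA} 1 = (I - Q) 1`, so `(I - Q)⁻¹ P_{BA} 1 = 1` and the rows of the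
censored matrix sum to `P_{AA} 1 + P_{AB} 1 = 1`.
-/

open Matrix BigOperators

/-- The submatrix of `P` with rows indexed by `S` and columns indexed by `T`. -/
def subBlock {E : Type*} (P : Matrix E E ℝ) (S T : Set E) : Matrix ↥S ↥T ℝ :=
  Matrix.of fun i j => P i j

namespace Matrix

section MinimumPrinciple

variable {ι : Type*} [Fintype ι]

lemma mulVec_mono_of_nonneg {Q : Matrix ι ι ℝ} (hQ : ∀ i j, 0 ≤ Q i j) {x y : ι → ℝ}
    (hxy : x ≤ y) : Q *ᵥ x ≤ Q *ᵥ y := fun i =>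
  Finset.sum_le_sum fun j _ => mul_le_mul_of_nonneg_left (hxy j) (hQ i j)

variable [DecidableEq ι] {Q : Matrix ι ι ℝ} (hQ : ∀ i j, 0 ≤ Q i j)
include hQ

lemma pow_mulVec_le_of_mulVec_le {x : ι → ℝ} (hx : Q *ᵥ x ≤ x) (n : ℕ) : Q ^ n *ᵥ x ≤ x := by
  induction n with
  | zero => simp
  | succ n ih =>
    rw [pow_succ, ← mulVec_mulVec]
    exact (mulVec_mono_of_nonneg (pow_apply_nonneg hQ n) hx).trans ih

variable (hleak : ∀ i, ∃ n, ∑ j, (Q ^ n) i j < 1)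
include hleak

lemma nonneg_of_mulVec_le {x : ι → ℝ} (hx : Q *ᵥ x ≤ x) : 0 ≤ x := by
  cases isEmpty_or_nonempty ι
  · exact fun i => isEmptyElim i
  obtain ⟨i₀, hmin⟩ := Finite.exists_min x
  obtain ⟨n, hn⟩ := hleak i₀
  have hcontract : (∑ j, (Q ^ n) i₀ j) * x i₀ ≤ x i₀ :=
    calc (∑ j, (Q ^ n) i₀ j) * x i₀ = ∑ j, (Q ^ n) i₀ j * x i₀ := Finset.sum_mul _ _ _
      _ ≤ ∑ j, (Q ^ n) i₀ j * x j := Finset.sum_le_sum fun j _ =>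
          mul_le_mul_of_nonneg_left (hmin j) (pow_apply_nonneg hQ n i₀ j)
      _ ≤ x i₀ := pow_mulVec_le_of_mulVec_le hQ hx n i₀
  have hx₀ : 0 ≤ x i₀ := by nlinarith
  exact fun i => hx₀.trans (hmin i)

lemma isUnit_one_sub_of_leaky : IsUnit (1 - Q) := by
  refine mulVec_injective_iff_isUnit.1 fun v w hvw => ?_
  have hfix : (1 - Q) *ᵥ (v - w) = 0 := by rw [mulVec_sub, hvw, sub_self]
  rw [sub_mulVec, one_mulVec, sub_eq_zero] at hfix
  have hpos : 0 ≤ v - w := nonneg_of_mulVec_le hQ hleak hfix.ge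
  have hneg : 0 ≤ -(v - w) := nonneg_of_mulVec_le hQ hleak (by rw [mulVec_neg, ← hfix])
  exact sub_eq_zero.1 (le_antisymm (neg_nonneg.1 hneg) hpos)

lemma inv_one_sub_apply_nonneg_of_leaky (i j : ι) : 0 ≤ (1 - Q)⁻¹ i j := by
  set N := (1 - Q)⁻¹
  have hN : N - Q * N = 1 := by
    have hinv :=
      mul_nonsing_inv _ ((isUnit_iff_isUnit_det _).1 (isUnit_one_sub_of_leaky hQ hleak))
    rwa [sub_mul, one_mul] at hinv
  have hcol : Q *ᵥ (fun k => N k j) ≤ fun k => N k j := fun k => by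
    have hkj := congrFun₂ hN k j
    rw [sub_apply, one_apply] at hkj
    change (Q * N) k j ≤ N k j
    split_ifs at hkj <;> linarith
  exact nonneg_of_mulVec_le hQ hleak hcol i

end MinimumPrinciple

end Matrix

lemma sum_subtype_le_sum {E M : Type*} [Fintype E] [AddCommMonoid M] [PartialOrder M]
    [IsOrderedAddMonoid M] {S : Set E} [Fintype S] {f : E → M} (hf : ∀ e, 0 ≤ f e) :
    ∑ k : S, f k ≤ ∑ e, f e :=
  calc ∑ k : S, f k = ∑ e ∈ Finset.univ.map (Function.Embedding.subtype (· ∈ S)), f e := by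
        rw [Finset.sum_map]; rfl
    _ ≤ ∑ e, f e := Finset.sum_le_univ_sum_of_nonneg hf

section Censoring

variable {E : Type*} [Fintype E] [DecidableEq E] {P : Matrix E E ℝ}

noncomputable def censor (P : Matrix E E ℝ) (A : Set E) [DecidablePred (· ∈ A)] :
    Matrix A A ℝ :=
  subBlock P A A + subBlock P A Aᶜ * (1 - subBlock P Aᶜ Aᶜ)⁻¹ * subBlock P Aᶜ A

lemma subBlock_pow_apply_le (hP : ∀ i j, 0 ≤ P i j) (S : Set E) [Fintype S] (n : ℕ)
    (i j : S) : (subBlock P S S ^ n) i j ≤ (P ^ n) i j := by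
  induction n generalizing j with
  | zero =>
    rw [pow_zero, pow_zero, one_apply, one_apply]
    split_ifs with h h' h' <;> simp_all [Subtype.ext_iff]
  | succ n ih =>
    rw [pow_succ, pow_succ, mul_apply, mul_apply]
    calc ∑ k : S, (subBlock P S S ^ n) i k * P k j
        ≤ ∑ k : S, (P ^ n) i k * P k j := Finset.sum_le_sum fun k _ =>
          mul_le_mul_of_nonneg_right (ih k) (hP _ _)
      _ ≤ ∑ e, (P ^ n) i e * P e j :=
          sum_subtype_le_sum (f := fun e => (P ^ n) i e * P e j) fun e =>
            mul_nonneg (pow_apply_nonneg hP n _ _) (hP e j)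

variable {A : Set E} [DecidablePred (· ∈ A)]

lemma censor_apply_nonneg (hP : ∀ i j, 0 ≤ P i j)
    (hN : ∀ i j, 0 ≤ (1 - subBlock P Aᶜ Aᶜ)⁻¹ i j) (i j : A) : 0 ≤ censor P A i j :=
  add_nonneg (hP i j) <| Finset.sum_nonneg fun k _ => mul_nonneg
    (Finset.sum_nonneg fun l _ => mul_nonneg (hP i l) (hN l k)) (hP k j)

variable (hP : P ∈ rowStochastic ℝ E)
include hP

lemma subBlock_mulVec_one_add_compl (S : Set E) [Fintype S] :
    subBlock P S A *ᵥ 1 + subBlock P S Aᶜ *ᵥ 1 = 1 := by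
  ext i
  have hsplit : ∑ j : A, P i j + ∑ j : ↥Aᶜ, P i j = 1 :=
    (Fintype.sum_subtype_add_sum_subtype (· ∈ A) (P i)).trans (sum_row_of_mem_rowStochastic hP i)
  simpa [subBlock, mulVec, dotProduct] using hsplit

lemma exists_sum_subBlock_compl_pow_lt_one (hirr : ∀ i j, ∃ n, 0 < (P ^ n) i j) {a : E}
    (ha : a ∈ A) (i : ↥Aᶜ) : ∃ n, ∑ j, (subBlock P Aᶜ Aᶜ ^ n) i j < 1 := by
  obtain ⟨n, hpos⟩ := hirr i a
  refine ⟨n, ?_⟩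
  have hPn := pow_mem hP n
  have hsplit : ∑ j : A, (P ^ n) i j + ∑ j : ↥Aᶜ, (P ^ n) i j = 1 :=
    (Fintype.sum_subtype_add_sum_subtype (· ∈ A) ((P ^ n) i)).trans
      (sum_row_of_mem_rowStochastic hPn i)
  have hmass : (P ^ n) i a ≤ ∑ j : A, (P ^ n) i j :=
    Finset.single_le_sum (f := fun j : A => (P ^ n) (i : E) j)
      (fun j _ => nonneg_of_mem_rowStochastic hPn) (Finset.mem_univ ⟨a, ha⟩)
  calc ∑ j, (subBlock P Aᶜ Aᶜ ^ n) i j ≤ ∑ j : ↥Aᶜ, (P ^ n) i j :=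
        Finset.sum_le_sum fun j _ => subBlock_pow_apply_le hP.1 _ n i j
    _ < 1 := by linarith

lemma censor_mulVec_one (hQ : IsUnit (1 - subBlock P Aᶜ Aᶜ)) : censor P A *ᵥ 1 = 1 := by
  have hBA : subBlock P Aᶜ A *ᵥ 1 = (1 - subBlock P Aᶜ Aᶜ) *ᵥ 1 := by
    rw [sub_mulVec, one_mulVec]
    exact eq_sub_of_add_eq (subBlock_mulVec_one_add_compl hP Aᶜ)
  rw [censor, add_mulVec, ← mulVec_mulVec, hBA, mulVec_mulVec, Matrix.mul_assoc,
    nonsing_inv_mul _ ((isUnit_iff_isUnit_det _).1 hQ), Matrix.mul_one,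
    subBlock_mulVec_one_add_compl hP (A := A) A]

end Censoring

theorem stmt7_general {E : Type*} [Fintype E] [DecidableEq E]
    (P : Matrix E E ℝ)
    (hP0 : ∀ i j, 0 ≤ P i j) (hP1 : ∀ i, ∑ j, P i j = 1)
    (hirr : ∀ i j, ∃ n, 1 ≤ n ∧ 0 < (P ^ n) i j)
    (A : Set E) [DecidablePred (· ∈ A)] (hA : A.Nonempty) :
    IsUnit (1 - subBlock P Aᶜ Aᶜ) ∧
    (∀ i j : ↥A, 0 ≤ (subBlock P A A +
      subBlock P A Aᶜ * (1 - subBlock P Aᶜ Aᶜ)⁻¹ * subBlock P Aᶜ A) i j) ∧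
    ∀ i : ↥A, ∑ j : ↥A, (subBlock P A A +
      subBlock P A Aᶜ * (1 - subBlock P Aᶜ Aᶜ)⁻¹ * subBlock P Aᶜ A) i j = 1 := by
  have hP : P ∈ rowStochastic ℝ E := mem_rowStochastic_iff_sum.2 ⟨hP0, hP1⟩
  obtain ⟨a, ha⟩ := hA
  have hQ : ∀ i j, 0 ≤ subBlock P Aᶜ Aᶜ i j := fun i j => hP0 i j
  have hleak := exists_sum_subBlock_compl_pow_lt_one hP
    (fun i j => (hirr i j).imp fun _ => And.right) ha
  have hunit := isUnit_one_sub_of_leaky hQ hleak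
  refine ⟨hunit, fun i j => ?_, fun i => ?_⟩
  · exact censor_apply_nonneg hP0 (inv_one_sub_apply_nonneg_of_leaky hQ hleak) i j
  · simpa [censor, mulVec, dotProduct] using congrFun (censor_mulVec_one hP hunit) i

theorem stmt7 {E : Type*} [Fintype E] [Nonempty E] [DecidableEq E]
    (P : Matrix E E ℝ)
    (hP0 : ∀ i j, 0 ≤ P i j) (hP1 : ∀ i, ∑ j, P i j = 1)
    (hirr : ∀ i j, ∃ n, 1 ≤ n ∧ 0 < (P ^ n) i j)
    (A : Set E) [DecidablePred (· ∈ A)] (hA : A.Nonempty) :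
    IsUnit (1 - subBlock P Aᶜ Aᶜ) ∧
    (∀ i j : ↥A, 0 ≤ (subBlock P A A +
      subBlock P A Aᶜ * (1 - subBlock P Aᶜ Aᶜ)⁻¹ * subBlock P Aᶜ A) i j) ∧
    ∀ i : ↥A, ∑ j : ↥A, (subBlock P A A +
      subBlock P A Aᶜ * (1 - subBlock P Aᶜ Aᶜ)⁻¹ * subBlock P Aᶜ A) i j = 1 :=
  stmt7_general P hP0 hP1 hirr A hA
end

section
/- Let E be a finite nonempty type, let P be a stochastic matrix on E, let π be an invariant probability vector of P, and let A ⊆ E be a subset with complement B such that I − P_{BB} is invertible; write Ĥ := (I − P_{BB})^{-1} and P^{(A)} := P_{AA} + P_{AB} Ĥ P_{BA}. If an E×E real matrix X satisfies Poisson's equation (I − P) X = I − e π^T, then its row block X_A indexed by A satisfies (I − P^{(A)}) X_A = [I, P_{AB} Ĥ] − (e + P_{AB} Ĥ e) π^T, and its row block X_B indexed by B satisfies X_B = Ĥ P_{BA} X_A + [O, Ĥ] − Ĥ e π^T. -/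
/-!
Reading Poisson's equation `X = P X + (I - e πᵀ)` row block by row block gives the linear
system `X_A = P_AA X_A + P_AB X_B + R_A`, `X_B = P_BA X_A + P_BB X_B + R_B`. Solving the
second equation for `X_B` (possible since `I - P_BB` is invertible) and substituting into
the first is block Gaussian elimination; it leaves the stochastic complement
`P^(A) = P_AA + P_AB Ĥ P_BA` acting on `X_A`, with right-hand side `R_A + P_AB Ĥ R_B`.
-/

open Matrix BigOperators

/-- The row block of an `E × E` matrix `X` with rows indexed by `S`. -/
def rowBlock {E : Type*} (X : Matrix E E ℝ) (S : Set E) : Matrix ↥S E ℝ :=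
  Matrix.of fun i j => X i j

/-- The `ι × E` matrix whose columns indexed by `A` form `M` and whose columns indexed
by the complement of `A` form `N`. -/
def blockRow {E ι : Type*} (A : Set E) [DecidablePred (· ∈ A)]
    (M : Matrix ι ↥A ℝ) (N : Matrix ι ↥(Aᶜ) ℝ) : Matrix ι E ℝ :=
  Matrix.of fun i j => if h : j ∈ A then M i ⟨j, h⟩ else N i ⟨j, h⟩

section BlockElimination

variable {R m n o : Type*} [CommRing R] [Fintype m] [Fintype n] [DecidableEq n]

theorem Matrix.eq_inv_one_sub_mul_of_eq_mul_add {M : Matrix n n R} (hM : IsUnit (1 - M))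
    {Y C : Matrix n o R} (hY : Y = M * Y + C) : Y = (1 - M)⁻¹ * C := by
  have hC : (1 - M) * Y = C := by
    rw [Matrix.sub_mul, Matrix.one_mul, sub_eq_iff_eq_add']
    exact hY
  rw [← hC]
  exact (nonsing_inv_mul_cancel_left _ Y ((isUnit_iff_isUnit_det _).mp hM)).symm

theorem Matrix.block_elimination [DecidableEq m]
    {PAA : Matrix m m R} {PAB : Matrix m n R} {PBA : Matrix n m R} {PBB : Matrix n n R}
    (hBB : IsUnit (1 - PBB)) {XA RA : Matrix m o R} {XB RB : Matrix n o R}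
    (hA : XA = PAA * XA + PAB * XB + RA) (hB : XB = PBA * XA + PBB * XB + RB) :
    (1 - (PAA + PAB * (1 - PBB)⁻¹ * PBA)) * XA = RA + PAB * ((1 - PBB)⁻¹ * RB)
      ∧ XB = (1 - PBB)⁻¹ * PBA * XA + (1 - PBB)⁻¹ * RB := by
  have hXB : XB = (1 - PBB)⁻¹ * PBA * XA + (1 - PBB)⁻¹ * RB := by
    have hB' : XB = PBB * XB + (PBA * XA + RB) := hB.trans (by abel)
    rw [Matrix.eq_inv_one_sub_mul_of_eq_mul_add hBB hB', Matrix.mul_add, Matrix.mul_assoc]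
  refine ⟨?_, hXB⟩
  have hA' : XA - (PAA * XA + PAB * XB) = RA := sub_eq_iff_eq_add'.mpr hA
  rw [← hA', hXB]
  simp only [Matrix.sub_mul, Matrix.add_mul, Matrix.one_mul, Matrix.mul_add, Matrix.mul_assoc]
  abel

end BlockElimination

section Blocks

variable {E : Type*} (A : Set E) [DecidablePred (· ∈ A)]

theorem rowBlock_add (X Y : Matrix E E ℝ) (S : Set E) :
    rowBlock (X + Y) S = rowBlock X S + rowBlock Y S := rfl

theorem rowBlock_sub (X Y : Matrix E E ℝ) (S : Set E) :
    rowBlock (X - Y) S = rowBlock X S - rowBlock Y S := rfl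

theorem rowBlock_vecMulVec (u v : E → ℝ) (S : Set E) :
    rowBlock (vecMulVec u v) S = vecMulVec (fun i : S => u i) v := rfl

theorem rowBlock_mul [Fintype E] (P X : Matrix E E ℝ) (S : Set E) :
    rowBlock (P * X) S
      = subBlock P S A * rowBlock X A + subBlock P S Aᶜ * rowBlock X Aᶜ := by
  ext i j
  simp only [rowBlock, subBlock, Matrix.add_apply, Matrix.mul_apply, Matrix.of_apply]
  exact (Fintype.sum_subtype_add_sum_subtype (· ∈ A) (fun k => P i k * X k j)).symm

theorem rowBlock_one [DecidableEq E] :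
    rowBlock (1 : Matrix E E ℝ) A = blockRow A (1 : Matrix ↥A ↥A ℝ) 0 := by
  ext i j
  simp only [rowBlock, blockRow, Matrix.of_apply]
  split_ifs with h
  · simp [Matrix.one_apply, Subtype.ext_iff]
  · exact Matrix.one_apply_ne fun hij => h (hij ▸ i.2)

theorem rowBlock_one_compl [DecidableEq E] :
    rowBlock (1 : Matrix E E ℝ) Aᶜ = blockRow A 0 (1 : Matrix ↥(Aᶜ) ↥(Aᶜ) ℝ) := by
  ext i j
  simp only [rowBlock, blockRow, Matrix.of_apply]
  split_ifs with h
  · exact Matrix.one_apply_ne fun hij => i.2 (hij ▸ h)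
  · simp [Matrix.one_apply, Subtype.ext_iff]

theorem mul_blockRow {ι κ : Type*} [Fintype ι] (M : Matrix κ ι ℝ)
    (N₁ : Matrix ι ↥A ℝ) (N₂ : Matrix ι ↥(Aᶜ) ℝ) :
    M * blockRow A N₁ N₂ = blockRow A (M * N₁) (M * N₂) := by
  ext i j
  simp only [blockRow, Matrix.mul_apply, Matrix.of_apply]
  split_ifs <;> rfl

theorem blockRow_add {ι : Type*} (M₁ M₂ : Matrix ι ↥A ℝ) (N₁ N₂ : Matrix ι ↥(Aᶜ) ℝ) :
    blockRow A M₁ N₁ + blockRow A M₂ N₂ = blockRow A (M₁ + M₂) (N₁ + N₂) := by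
  ext i j
  simp only [blockRow, Matrix.add_apply, Matrix.of_apply]
  split_ifs <;> rfl

end Blocks

theorem stmt13_general {E : Type*} [Fintype E] [DecidableEq E]
    (P : Matrix E E ℝ)
    (π : E → ℝ)
    (A : Set E) [DecidablePred (· ∈ A)]
    (hBB : IsUnit (1 - subBlock P Aᶜ Aᶜ))
    (X : Matrix E E ℝ)
    (hX : (1 - P) * X = 1 - Matrix.vecMulVec (fun _ => (1 : ℝ)) π) :
    ((1 - (subBlock P A A +
          subBlock P A Aᶜ * (1 - subBlock P Aᶜ Aᶜ)⁻¹ * subBlock P Aᶜ A)) * rowBlock X A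
        = blockRow A (1 : Matrix ↥A ↥A ℝ) (subBlock P A Aᶜ * (1 - subBlock P Aᶜ Aᶜ)⁻¹)
          - Matrix.vecMulVec
              ((fun _ : ↥A => (1 : ℝ)) +
                (subBlock P A Aᶜ * (1 - subBlock P Aᶜ Aᶜ)⁻¹) *ᵥ (fun _ : ↥(Aᶜ) => (1 : ℝ)))
              π)
    ∧ (rowBlock X Aᶜ
        = (1 - subBlock P Aᶜ Aᶜ)⁻¹ * subBlock P Aᶜ A * rowBlock X A
          + blockRow A (0 : Matrix ↥(Aᶜ) ↥A ℝ) ((1 - subBlock P Aᶜ Aᶜ)⁻¹)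
          - Matrix.vecMulVec ((1 - subBlock P Aᶜ Aᶜ)⁻¹ *ᵥ (fun _ : ↥(Aᶜ) => (1 : ℝ))) π) := by
  have hRows : ∀ S, rowBlock X S = subBlock P S A * rowBlock X A
      + subBlock P S Aᶜ * rowBlock X Aᶜ + rowBlock (1 - vecMulVec (fun _ => 1) π) S := by
    intro S
    rw [← rowBlock_mul, ← rowBlock_add, ← hX, Matrix.sub_mul, Matrix.one_mul, add_sub_cancel]
  obtain ⟨hXA, hXB⟩ := Matrix.block_elimination hBB (hRows A) (hRows Aᶜ)
  simp only [rowBlock_sub, rowBlock_one A, rowBlock_one_compl A, rowBlock_vecMulVec,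
    Matrix.mul_sub, mul_blockRow, Matrix.mul_zero, Matrix.mul_one, mul_vecMulVec,
    Matrix.mulVec_mulVec] at hXA hXB
  refine ⟨?_, by rw [hXB, add_sub_assoc]⟩
  rw [hXA, sub_add_sub_comm, blockRow_add, add_vecMulVec, add_zero, zero_add]

theorem stmt13 {E : Type*} [Fintype E] [Nonempty E] [DecidableEq E]
    (P : Matrix E E ℝ)
    (hP0 : ∀ i j, 0 ≤ P i j) (hP1 : ∀ i, ∑ j, P i j = 1)
    (π : E → ℝ) (hπ0 : ∀ i, 0 ≤ π i) (hπ1 : ∑ i, π i = 1)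
    (hπP : π ᵥ* P = π)
    (A : Set E) [DecidablePred (· ∈ A)]
    (hBB : IsUnit (1 - subBlock P Aᶜ Aᶜ))
    (X : Matrix E E ℝ)
    (hX : (1 - P) * X = 1 - Matrix.vecMulVec (fun _ => (1 : ℝ)) π) :
    ((1 - (subBlock P A A +
          subBlock P A Aᶜ * (1 - subBlock P Aᶜ Aᶜ)⁻¹ * subBlock P Aᶜ A)) * rowBlock X A
        = blockRow A (1 : Matrix ↥A ↥A ℝ) (subBlock P A Aᶜ * (1 - subBlock P Aᶜ Aᶜ)⁻¹)
          - Matrix.vecMulVec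
              ((fun _ : ↥A => (1 : ℝ)) +
                (subBlock P A Aᶜ * (1 - subBlock P Aᶜ Aᶜ)⁻¹) *ᵥ (fun _ : ↥(Aᶜ) => (1 : ℝ)))
              π)
    ∧ (rowBlock X Aᶜ
        = (1 - subBlock P Aᶜ Aᶜ)⁻¹ * subBlock P Aᶜ A * rowBlock X A
          + blockRow A (0 : Matrix ↥(Aᶜ) ↥A ℝ) ((1 - subBlock P Aᶜ Aᶜ)⁻¹)
          - Matrix.vecMulVec ((1 - subBlock P Aᶜ Aᶜ)⁻¹ *ᵥ (fun _ : ↥(Aᶜ) => (1 : ℝ))) π) :=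
  stmt13_general P π A hBB X hX
end
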